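/- Weinstock's inequality fails for annuli: there exists ε ∈ (0,1) such that E(ε) > 2π; in fact E(1/10) > 2π, where E(ε) = ((1+ε²)/(2ε(1−ε)))·(1 − √(1 − 4ε((1−ε)/(1+ε²))²))·2π(1+ε). -/

import Mathlib

/-! At ε = 1/10 every quantity in E is rational except one square root, and
`E (1/10) = 1111/90 · (1 - √(6961/10201)) · π`. Since `84² > 6961`, the root is below `84/101`,
so `E (1/10) > 1111/90 · 17/101 · π = 187/90 · π > 2π`. -/

noncomputable def E (ε : ℝ) : ℝ :=
  ((1 + ε^2)/(2*ε*(1 - ε))) *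
    (1 - Real.sqrt (1 - 4*ε*((1 - ε)/(1 + ε^2))^2)) * (2 * Real.pi * (1 + ε))

open Real

lemma E_one_tenth : E (1/10) = 1111 / 90 * (1 - √(6961 / 10201)) * π := by
  unfold E
  norm_num
  ring

lemma sqrt_6961_div_10201_lt : √(6961 / 10201 : ℝ) < 84 / 101 := by
  rw [sqrt_lt' (by norm_num)]
  norm_num

lemma two_pi_lt_E_one_tenth : 2 * π < E (1/10) :=
  calc 2 * π < 1111 / 90 * (1 - 84 / 101) * π := by linarith [pi_pos]
    _ < E (1/10) := by
      rw [E_one_tenth]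
      gcongr
      exact sqrt_6961_div_10201_lt

theorem weinstock_fails_for_annuli :
    (∃ ε ∈ Set.Ioo (0:ℝ) 1, E ε > 2 * Real.pi) ∧ E (1/10) > 2 * Real.pi :=
  ⟨⟨1/10, by norm_num, two_pi_lt_E_one_tenth⟩, two_pi_lt_E_one_tenth⟩
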